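/- arXiv:0802.2828 — 8 statements merged into one kernel-verified Lean document; each statement's English description precedes it below -/
import Mathlib

section
/- Every nonempty chain in a subshift has a least upper bound for the pattern preorder: if S ⊆ Q^{ℤ²} is a closed, shift-invariant set and C ⊆ S is nonempty and totally preordered by ≼, then there exists u ∈ S such that c ≼ u for every c ∈ C, and moreover every pattern appearing in u appears in some element of C (hence u ≼ w for every w that is an upper bound of C). -/
open Set

/-- A configuration assigns a state to each cell of the plane. -/
abbrev Config (Q : Type*) : Type _ := (ℤ × ℤ) → Q

/-- The shift by a vector `v`: `σ_v c = fun x => c (x + v)`. -/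
def shiftC {Q : Type*} (v : ℤ × ℤ) (c : Config Q) : Config Q := fun x => c (x + v)

/-- The pattern `P` with (finite) domain `V` appears in `c` at translate `t`. -/
def AppearsAt {Q : Type*} (c : Config Q) (V : Finset (ℤ × ℤ)) (P : (ℤ × ℤ) → Q)
    (t : ℤ × ℤ) : Prop :=
  ∀ x ∈ V, c (x + t) = P x

/-- The pattern `P` with (finite) domain `V` appears in `c`. -/
def Appears {Q : Type*} (c : Config Q) (V : Finset (ℤ × ℤ)) (P : (ℤ × ℤ) → Q) : Prop :=
  ∃ t : ℤ × ℤ, AppearsAt c V P t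

/-- The pattern preorder: `x ≼ y` iff every pattern appearing in `x` appears in `y`. -/
def PatLe {Q : Type*} (x y : Config Q) : Prop :=
  ∀ (V : Finset (ℤ × ℤ)) (P : (ℤ × ℤ) → Q), Appears x V P → Appears y V P

/-- A set of configurations is shift-invariant. -/
def ShiftInvariant {Q : Type*} (S : Set (Config Q)) : Prop :=
  ∀ c ∈ S, ∀ v : ℤ × ℤ, shiftC v c ∈ S

/-- `c` is an isolated point of `S` (in the subspace topology). -/
def IsolatedIn {Q : Type*} [TopologicalSpace Q] (S : Set (Config Q)) (c : Config Q) : Prop :=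
  ∃ U : Set (Config Q), IsOpen U ∧ U ∩ S = {c}

/-- The topological derivative: the non-isolated points of `S`. -/
def derivSet {Q : Type*} [TopologicalSpace Q] (S : Set (Config Q)) : Set (Config Q) :=
  {c ∈ S | ¬ IsolatedIn S c}

/-- Transfinite iteration of the topological derivative (Cantor–Bendixson). -/
noncomputable def CBIter {Q : Type*} [TopologicalSpace Q] (S : Set (Config Q))
    (o : Ordinal) : Set (Config Q) :=
  Ordinal.limitRecOn o S (fun _ ih => derivSet ih)
    (fun o _ ih => ⋂ (β : {β : Ordinal // β < o}), ih β.1 β.2)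

/-- The Cantor–Bendixson rank of `c` in `S`: least `λ` with `c ∉ S^{(λ)}`. -/
noncomputable def CBRank {Q : Type*} [TopologicalSpace Q] (S : Set (Config Q))
    (c : Config Q) : Ordinal :=
  sInf {l : Ordinal | c ∉ CBIter S l}

/-- A configuration is periodic iff its shift orbit is finite (equivalently, its
stabilizer has finite index in `ℤ²`). -/
def IsPeriodic {Q : Type*} (c : Config Q) : Prop :=
  (Set.range fun v : ℤ × ℤ => shiftC v c).Finite

/-- `c` is a tiling for the tile-set with domain `V` and allowed patterns `A`. -/
def IsTiling {Q : Type*} (V : Finset (ℤ × ℤ)) (A : Set ({x // x ∈ V} → Q))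
    (c : Config Q) : Prop :=
  ∀ t : ℤ × ℤ, (fun y : {x // x ∈ V} => c (t + y.1)) ∈ A

/-- The set of tilings of a tile-set. -/
def Tilings {Q : Type*} (V : Finset (ℤ × ℤ)) (A : Set ({x // x ∈ V} → Q)) :
    Set (Config Q) :=
  {c | IsTiling V A c}


section StmtTwoAux

variable {Q : Type*}

lemma appears_shift' (v : ℤ × ℤ) (c : Config Q) (V : Finset (ℤ × ℤ))
    (P : (ℤ × ℤ) → Q) : Appears (shiftC v c) V P ↔ Appears c V P := by
  constructor
  · rintro ⟨t, h⟩
    exact ⟨t + v, fun x hx => by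
      have := h x hx; simpa [shiftC, add_assoc] using this⟩
  · rintro ⟨t, h⟩
    refine ⟨t - v, fun x hx => ?_⟩
    show c (x + (t - v) + v) = P x
    rw [add_assoc, sub_add_cancel]
    exact h x hx

lemma isOpen_appearsAt' [TopologicalSpace Q] [DiscreteTopology Q]
    (V : Finset (ℤ × ℤ)) (P : (ℤ × ℤ) → Q) (t : ℤ × ℤ) :
    IsOpen {y : Config Q | AppearsAt y V P t} := by
  have : {y : Config Q | AppearsAt y V P t} = ⋂ x ∈ V, {y : Config Q | y (x + t) = P x} := by
    ext y; simp [AppearsAt]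
  rw [this]
  refine isOpen_biInter_finset fun x _ => ?_
  have : {y : Config Q | y (x + t) = P x} = (fun y : Config Q => y (x + t)) ⁻¹' {P x} := by
    ext y; simp
  rw [this]
  exact (isOpen_discrete {P x}).preimage (continuous_apply (x + t))

lemma isOpen_appears' [TopologicalSpace Q] [DiscreteTopology Q]
    (V : Finset (ℤ × ℤ)) (P : (ℤ × ℤ) → Q) :
    IsOpen {y : Config Q | Appears y V P} := by
  have : {y : Config Q | Appears y V P} = ⋃ t, {y : Config Q | AppearsAt y V P t} := by
    ext y; simp [Appears]
  rw [this]
  exact isOpen_iUnion fun t => isOpen_appearsAt' V P t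

end StmtTwoAux

/-- Every nonempty chain in a subshift has a least upper bound for
the pattern preorder. -/
theorem stmt2 {Q : Type*} [Fintype Q] [Nonempty Q] [TopologicalSpace Q] [DiscreteTopology Q]
    (S : Set (Config Q)) (hcl : IsClosed S) (hinv : ShiftInvariant S)
    (C : Set (Config Q)) (hCS : C ⊆ S) (hCne : C.Nonempty)
    (hchain : ∀ a ∈ C, ∀ b ∈ C, PatLe a b ∨ PatLe b a) :
    ∃ u ∈ S, (∀ c ∈ C, PatLe c u) ∧
      ∀ (V : Finset (ℤ × ℤ)) (P : (ℤ × ℤ) → Q), Appears u V P → ∃ c ∈ C, Appears c V P := by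
  classical
  set Orb : Set (Config Q) := {y | ∃ c ∈ C, ∃ v : ℤ × ℤ, y = shiftC v c} with hOrb
  set X : Set (Config Q) := closure Orb with hXdef
  have hOrbX : Orb ⊆ X := subset_closure
  have hOrbS : Orb ⊆ S := by
    rintro y ⟨c, hc, v, rfl⟩; exact hinv c (hCS hc) v
  have hXS : X ⊆ S := closure_minimal hOrbS hcl
  have hXclosed : IsClosed X := isClosed_closure
  -- every pattern appearing in a point of X appears in some element of C
  have key : ∀ x ∈ X, ∀ (V : Finset (ℤ × ℤ)) (P : (ℤ × ℤ) → Q),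
      Appears x V P → ∃ c ∈ C, Appears c V P := by
    rintro x hx V P ⟨t, ht⟩
    have hopen : IsOpen {y : Config Q | AppearsAt y V P t} := isOpen_appearsAt' V P t
    obtain ⟨z, hz1, hz2⟩ := (mem_closure_iff.mp hx) _ hopen ht
    obtain ⟨c, hc, v, rfl⟩ := hz2
    exact ⟨c, hc, (appears_shift' v c V P).mp ⟨t, hz1⟩⟩
  -- topological setup
  haveI : CompactSpace (Config Q) := inferInstance
  have hXcompact : IsCompact X := hXclosed.isCompact
  haveI : CompactSpace ↥X := isCompact_iff_compactSpace.mp hXcompact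
  haveI : T2Space ↥X := inferInstance
  haveI : WeaklyLocallyCompactSpace ↥X := inferInstance
  haveI : LocallyCompactSpace ↥X := inferInstance
  haveI : BaireSpace ↥X := inferInstance
  haveI : Nonempty ↥X := by
    obtain ⟨c, hc⟩ := hCne
    exact ⟨⟨shiftC 0 c, hOrbX ⟨c, hc, 0, rfl⟩⟩⟩
  -- countable index of all abstract patterns
  let ι := (V : Finset (ℤ × ℤ)) × ({x // x ∈ V} → Q)
  haveI : Countable ι := inferInstance
  let Pat : ι → (ℤ × ℤ) → Q := fun p x =>
    if h : x ∈ p.1 then p.2 ⟨x, h⟩ else Classical.arbitrary Q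
  let O : ι → Set ↥X := fun p =>
    if (∃ c ∈ C, Appears c p.1 (Pat p)) then {x : ↥X | Appears x.1 p.1 (Pat p)} else univ
  have hOopen : ∀ p, IsOpen (O p) := by
    intro p
    by_cases h : ∃ c ∈ C, Appears c p.1 (Pat p)
    · simp only [O, if_pos h]
      exact (isOpen_appears' p.1 (Pat p)).preimage continuous_subtype_val
    · simp only [O, if_neg h]; exact isOpen_univ
  have hOdense : ∀ p, Dense (O p) := by
    intro p
    by_cases h : ∃ c ∈ C, Appears c p.1 (Pat p)
    · simp only [O, if_pos h]
      rw [dense_iff_inter_open]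
      rintro U hU ⟨x, hxU⟩
      obtain ⟨W, hW, hWU⟩ := isOpen_induced_iff.mp hU
      have hxW : x.1 ∈ W := by rw [← hWU] at hxU; exact hxU
      obtain ⟨I, uu, huu, hsub⟩ := isOpen_pi_iff.mp hW x.1 hxW
      -- find an orbit point agreeing with x on I
      have hNopen : IsOpen {y : Config Q | ∀ i ∈ I, y i = x.1 i} := by
        have : {y : Config Q | ∀ i ∈ I, y i = x.1 i}
            = ⋂ i ∈ I, (fun y : Config Q => y i) ⁻¹' {x.1 i} := by
          ext y; simp
        rw [this]
        exact isOpen_biInter_finset fun i _ =>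
          (isOpen_discrete _).preimage (continuous_apply i)
      obtain ⟨z, hz1, hz2⟩ := (mem_closure_iff.mp x.2) _ hNopen (fun i _ => rfl)
      obtain ⟨c₀, hc₀, v, rfl⟩ := hz2
      -- the I-pattern of x appears in c₀
      have hRc₀ : Appears c₀ I (shiftC v c₀) := ⟨v, fun i _ => rfl⟩
      obtain ⟨c₁, hc₁, hP₁⟩ := h
      -- combine using the chain hypothesis
      obtain ⟨d, hd, hRd, hPd⟩ :
          ∃ d ∈ C, Appears d I (shiftC v c₀) ∧ Appears d p.1 (Pat p) := by
        rcases hchain c₀ hc₀ c₁ hc₁ with hle | hle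
        · exact ⟨c₁, hc₁, hle _ _ hRc₀, hP₁⟩
        · exact ⟨c₀, hc₀, hRc₀, hle _ _ hP₁⟩
      obtain ⟨s, hs⟩ := hRd
      refine ⟨⟨shiftC s d, hOrbX ⟨d, hd, s, rfl⟩⟩, ?_, ?_⟩
      · rw [← hWU]
        refine hsub ?_
        rw [Set.mem_pi]
        intro i hi
        have hiF : i ∈ I := Finset.mem_coe.mp hi
        have heq : shiftC s d i = x.1 i := by
          have h1 : d (i + s) = shiftC v c₀ i := hs i hiF
          have h2 : shiftC v c₀ i = x.1 i := hz1 i hiF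
          show d (i + s) = x.1 i
          rw [h1, h2]
        show shiftC s d i ∈ uu i
        rw [heq]
        exact (huu i hiF).2
      · exact (appears_shift' s d p.1 (Pat p)).mpr hPd
    · simp only [O, if_neg h]; exact dense_univ
  have hdense := dense_iInter_of_isOpen hOopen hOdense
  obtain ⟨u, hu⟩ := hdense.nonempty
  have huO : ∀ p, u ∈ O p := by
    intro p; exact mem_iInter.mp hu p
  refine ⟨u.1, hXS u.2, ?_, fun V P hVP => key u.1 u.2 V P hVP⟩
  intro c hc V P ⟨t, ht⟩
  set p : ι := ⟨V, fun i => P i.1⟩ with hp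
  have hPat : ∀ i ∈ V, Pat p i = P i := by
    intro i hi; simp only [Pat, hp, dif_pos hi]
  have hcPat : Appears c V (Pat p) :=
    ⟨t, fun i hi => by rw [hPat i hi]; exact ht i hi⟩
  have hcond : ∃ c' ∈ C, Appears c' p.1 (Pat p) := ⟨c, hc, hcPat⟩
  have := huO p
  rw [show O p = {x : ↥X | Appears x.1 p.1 (Pat p)} from if_pos hcond] at this
  obtain ⟨t', ht'⟩ := this
  exact ⟨t', fun i hi => by rw [← hPat i hi]; exact ht' i hi⟩
end

section
/- A configuration x ∈ Q^{ℤ²} is minimal for the pattern preorder (i.e., for every configuration y, y ≼ x implies x ≼ y) if and only if its equivalence class [x] = { y ∈ Q^{ℤ²} : y ≼ x and x ≼ y } is a closed subset of Q^{ℤ²}. -/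
open Set

/-- `x` is minimal for the pattern preorder iff its equivalence
class is closed. -/
theorem stmt6 {Q : Type*} [Fintype Q] [Nonempty Q] [TopologicalSpace Q] [DiscreteTopology Q]
    (x : Config Q) :
    (∀ y : Config Q, PatLe y x → PatLe x y) ↔
      IsClosed {y : Config Q | PatLe y x ∧ PatLe x y} := by
  constructor
  · intro h
    have heq : {y : Config Q | PatLe y x ∧ PatLe x y} = {y | PatLe y x} := by
      ext y; exact ⟨fun h' => h'.1, fun h' => ⟨h', h y h'⟩⟩
    rw [heq]
    apply isClosed_of_closure_subset
    intro y hy V P hP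
    obtain ⟨t, ht⟩ := hP
    have hU : IsOpen {z : Config Q | ∀ v ∈ V, z (v + t) = P v} := by
      have he : {z : Config Q | ∀ v ∈ V, z (v + t) = P v} =
          ⋂ v ∈ V, {z : Config Q | z (v + t) = P v} := by ext z; simp
      rw [he]
      refine isOpen_biInter_finset fun v _ => ?_
      show IsOpen ((fun z : Config Q => z (v + t)) ⁻¹' {a | a = P v})
      exact (isOpen_discrete _).preimage (continuous_apply (v + t))
    rcases mem_closure_iff.mp hy _ hU ht with ⟨z, hzU, hz⟩
    exact hz V P ⟨t, hzU⟩
  · intro hC y hyx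
    have hshift : ∀ t : ℤ × ℤ, shiftC t x ∈ {y | PatLe y x ∧ PatLe x y} := by
      intro t
      constructor
      · rintro V P ⟨s, hs⟩
        refine ⟨s + t, fun v hv => ?_⟩
        have := hs v hv
        simpa [shiftC, add_assoc] using this
      · rintro V P ⟨s, hs⟩
        refine ⟨s - t, fun v hv => ?_⟩
        have := hs v hv
        show x (v + (s - t) + t) = P v
        rw [add_assoc, sub_add_cancel]
        exact this
    have hmem : y ∈ closure (Set.range fun t : ℤ × ℤ => shiftC t x) := by
      rw [mem_closure_iff]
      intro U hU hyU
      obtain ⟨I, u, hIu, hsub⟩ := isOpen_pi_iff.mp hU y hyU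
      obtain ⟨t, ht⟩ := hyx I (fun v => y v) ⟨0, fun v hv => by simp⟩
      refine ⟨shiftC t x, hsub fun i hi => ?_, ⟨t, rfl⟩⟩
      have h1 : shiftC t x i = y i := ht i (by simpa using hi)
      rw [h1]
      exact (hIu i (by simpa using hi)).2
    have := hC.closure_subset_iff.mpr (Set.range_subset_iff.mpr hshift) hmem
    exact this.2
end

section
/- Every configuration is of type (a) or of type (b): if some pattern appears in a configuration x ∈ Q^{ℤ²} at exactly finitely many (and at least one) translates, then there exists a pattern that appears in x at exactly one translate. -/
open Set

/-- If some pattern appears in `x` at finitely many (and at least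
one) translates, then some pattern appears in `x` at exactly one translate. -/
theorem stmt7 {Q : Type*} [Fintype Q] [Nonempty Q] (x : Config Q)
    (h : ∃ (V : Finset (ℤ × ℤ)) (P : (ℤ × ℤ) → Q),
      {t : ℤ × ℤ | AppearsAt x V P t}.Finite ∧ {t : ℤ × ℤ | AppearsAt x V P t}.Nonempty) :
    ∃ (V : Finset (ℤ × ℤ)) (P : (ℤ × ℤ) → Q), ∃! t : ℤ × ℤ, AppearsAt x V P t := by
  classical
  obtain ⟨V, P, hfin, t₀, ht₀⟩ := h
  have key : ∀ t, AppearsAt x V P t → t ≠ t₀ → ∃ y, x (y + t) ≠ x (y + t₀) := by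
    intro t ht hne
    by_contra hc
    push_neg at hc
    set p := t - t₀ with hp
    have hp0 : p ≠ 0 := sub_ne_zero.mpr hne
    have hper : ∀ z, x (z + p) = x z := by
      intro z
      have h1 := hc (z - t₀)
      have e1 : z - t₀ + t = z + p := by rw [hp]; abel
      have e2 : z - t₀ + t₀ = z := by abel
      rw [e1, e2] at h1
      exact h1
    have hmem : ∀ n : ℕ, AppearsAt x V P (t₀ + n • p) := by
      intro n
      induction n with
      | zero => simpa using ht₀
      | succ n ih =>
        intro y hy
        have e : y + (t₀ + (n + 1) • p) = (y + (t₀ + n • p)) + p := by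
          rw [succ_nsmul]; abel
        rw [e, hper]
        exact ih y hy
    have hinj : Function.Injective (fun n : ℕ => t₀ + n • p) := by
      intro n m hnm
      simp only [add_right_injective] at hnm
      have hnm' : (n : ℤ) • p = (m : ℤ) • p := by
        exact_mod_cast add_left_cancel hnm
      have := smul_left_injective ℤ hp0 hnm'
      exact_mod_cast this
    have : {t : ℤ × ℤ | AppearsAt x V P t}.Infinite :=
      Set.infinite_of_injective_forall_mem hinj (fun n => hmem n)
    exact this hfin
  choose! w hw using key
  refine ⟨V ∪ hfin.toFinset.image w, fun y => x (y + t₀), t₀, ?_, ?_⟩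
  · intro y _; rfl
  · intro t ht
    have htV : AppearsAt x V P t := by
      intro y hy
      have := ht y (Finset.mem_union_left _ hy)
      rw [this]; exact ht₀ y hy
    by_contra hne
    have hwt : w t ∈ V ∪ hfin.toFinset.image w :=
      Finset.mem_union_right _ (Finset.mem_image_of_mem w (hfin.mem_toFinset.mpr htV))
    exact hw t htV hne (ht (w t) hwt)
end

section
/- If a configuration x ∈ Q^{ℤ²} is of type (b), i.e., some pattern appears in x at exactly one translate, then every configuration equivalent to x is a shift of x: for every y with y ≼ x and x ≼ y there exists v ∈ ℤ² with y = σ_v(x). -/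
open Set

/-- If `x` is of type (b), then every configuration equivalent to
`x` is a shift of `x`. -/
theorem stmt8 {Q : Type*} [Fintype Q] [Nonempty Q] (x : Config Q)
    (hb : ∃ (V : Finset (ℤ × ℤ)) (P : (ℤ × ℤ) → Q), ∃! t : ℤ × ℤ, AppearsAt x V P t) :
    ∀ y : Config Q, PatLe y x → PatLe x y → ∃ v : ℤ × ℤ, y = shiftC v x := by
  obtain ⟨V, P, t₀, ht₀, huniq⟩ := hb
  intro y hyx hxy
  obtain ⟨s, hs⟩ := hxy V P ⟨t₀, ht₀⟩
  refine ⟨t₀ - s, funext fun z => ?_⟩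
  have hap : Appears y (insert z (V.image (· + s))) y := ⟨0, fun w _ => by simp⟩
  obtain ⟨u, hu⟩ := hyx _ _ hap
  have hxVP : AppearsAt x V P (s + u) := by
    intro v hv
    have := hu (v + s) (Finset.mem_insert_of_mem (Finset.mem_image_of_mem _ hv))
    rw [← add_assoc, this, hs v hv]
  have : s + u = t₀ := huniq _ hxVP
  have hz := hu z (Finset.mem_insert_self _ _)
  rw [shiftC, ← hz]
  congr 1
  rw [← this]
  abel
end

section
/- The pattern preorder reverses Cantor–Bendixson ranks: let S ⊆ Q^{ℤ²} be a closed, shift-invariant set and let x, y ∈ S be ranked elements with x ≺ y (x ≼ y but not y ≼ x); then rk(x) > rk(y). -/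
open Set

/-!
If `x ≼ y` then `x` lies in the closure of the shift orbit of `y`. Every derivative
`S^{(α)}` of a closed shift-invariant set is again closed and shift-invariant, so
`y ∈ S^{(α)}` forces `x ∈ S^{(α)}`, whence `rk(y) ≤ rk(x)`. The rank of a ranked point
of `S` is a successor `β + 1`, and `x` is isolated in `S^{(β)}`. If the ranks were equal,
`y` would lie in `S^{(β)}` as well, so the isolating neighbourhood of `x` would contain
a shift of `y`, which then has to be `x` itself; but a shift of `y` has the same
patterns as `y`, contradicting `y ⋠ x`.
-/

section Shift

variable {Q : Type*}

lemma shiftC_injective (v : ℤ × ℤ) : Function.Injective (shiftC (Q := Q) v) := by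
  intro a b h
  funext z
  simpa [shiftC] using congrFun h (z - v)

lemma continuous_shiftC [TopologicalSpace Q] (v : ℤ × ℤ) : Continuous (shiftC (Q := Q) v) :=
  continuous_pi fun _ => continuous_apply _

lemma patLe_shiftC (v : ℤ × ℤ) (c : Config Q) : PatLe c (shiftC v c) := by
  rintro V P ⟨t, ht⟩
  refine ⟨t - v, fun a ha => ?_⟩
  simpa [shiftC, add_assoc] using ht a ha

end Shift

section Derivative

variable {Q : Type*} [TopologicalSpace Q] {S T : Set (Config Q)} {c : Config Q}

lemma isolatedIn_iff :
    IsolatedIn S c ↔ c ∈ S ∧ ∃ U, IsOpen U ∧ c ∈ U ∧ ∀ d ∈ S, d ∈ U → d = c := by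
  constructor
  · rintro ⟨U, hU, hUS⟩
    have hc : c ∈ U ∩ S := hUS ▸ rfl
    exact ⟨hc.2, U, hU, hc.1, fun d hd hdU => (hUS ▸ ⟨hdU, hd⟩ : d ∈ ({c} : Set _))⟩
  · rintro ⟨hc, U, hU, hcU, hS⟩
    exact ⟨U, hU, Set.eq_singleton_iff_unique_mem.2 ⟨⟨hcU, hc⟩, fun d hd => hS d hd.2 hd.1⟩⟩

lemma IsolatedIn.mono (hST : S ⊆ T) (hc : c ∈ S) (h : IsolatedIn T c) : IsolatedIn S c := by
  obtain ⟨-, U, hU, hcU, hT⟩ := isolatedIn_iff.1 h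
  exact isolatedIn_iff.2 ⟨hc, U, hU, hcU, fun d hd => hT d (hST hd)⟩

lemma derivSet_subset (S : Set (Config Q)) : derivSet S ⊆ S :=
  fun _ hc => hc.1

lemma derivSet_mono (hST : S ⊆ T) : derivSet S ⊆ derivSet T :=
  fun _ ⟨hc, hni⟩ => ⟨hST hc, fun h => hni (h.mono hST hc)⟩

lemma isClosed_derivSet (hS : IsClosed S) : IsClosed (derivSet S) := by
  rw [← isOpen_compl_iff, isOpen_iff_forall_mem_open]
  intro c hc
  by_cases hcS : c ∈ S
  · have hiso : IsolatedIn S c := not_not.1 fun h => hc ⟨hcS, h⟩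
    obtain ⟨-, U, hU, hcU, hUS⟩ := isolatedIn_iff.1 hiso
    refine ⟨U, fun d hdU hd => ?_, hU, hcU⟩
    obtain rfl := hUS d hd.1 hdU
    exact hd.2 hiso
  · exact ⟨Sᶜ, fun d hd hdS => hd hdS.1, hS.isOpen_compl, hcS⟩

lemma shiftInvariant_derivSet (hS : ShiftInvariant S) : ShiftInvariant (derivSet S) := by
  refine fun c ⟨hcS, hni⟩ v => ⟨hS c hcS v, fun h => hni ?_⟩
  obtain ⟨-, U, hU, hcU, hUS⟩ := isolatedIn_iff.1 h
  exact isolatedIn_iff.2 ⟨hcS, shiftC v ⁻¹' U, hU.preimage (continuous_shiftC v), hcU,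
    fun d hd hdU => shiftC_injective v (hUS _ (hS d hd v) hdU)⟩

end Derivative

universe u v

section CantorBendixson

variable {Q : Type*} [TopologicalSpace Q] {S : Set (Config Q)} {c : Config Q}

lemma CBIter_zero (S : Set (Config Q)) : CBIter S 0 = S :=
  Ordinal.limitRecOn_zero _ _ _

lemma CBIter_add_one (S : Set (Config Q)) (o : Ordinal) :
    CBIter S (o + 1) = derivSet (CBIter S o) :=
  Ordinal.limitRecOn_add_one _ _ _ _

lemma CBIter_limit (S : Set (Config Q)) {o : Ordinal} (ho : Order.IsSuccLimit o) :
    CBIter S o = ⋂ β : {β : Ordinal // β < o}, CBIter S β.1 :=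
  Ordinal.limitRecOn_limit _ _ _ _ ho

lemma CBIter_antitone (S : Set (Config Q)) : Antitone (CBIter S) := by
  intro o o' h
  induction o' using Ordinal.limitRecOn with
  | zero => rw [nonpos_iff_eq_zero.1 h]
  | add_one o' ih =>
    rcases h.eq_or_lt with rfl | h
    · exact subset_rfl
    · rw [CBIter_add_one]
      exact (derivSet_subset _).trans (ih (Order.lt_add_one_iff.1 h))
  | limit o' ho _ =>
    rcases h.eq_or_lt with rfl | h
    · exact subset_rfl
    · rw [CBIter_limit _ ho]
      exact Set.iInter_subset (fun β : {β : Ordinal // β < o'} => CBIter S β.1) ⟨o, h⟩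

lemma isClosed_CBIter (hS : IsClosed S) (o : Ordinal) : IsClosed (CBIter S o) := by
  induction o using Ordinal.limitRecOn with
  | zero => rwa [CBIter_zero]
  | add_one o ih => rw [CBIter_add_one]; exact isClosed_derivSet ih
  | limit o ho ih => rw [CBIter_limit _ ho]; exact isClosed_iInter fun β => ih β.1 β.2

lemma shiftInvariant_CBIter (hS : ShiftInvariant S) (o : Ordinal) :
    ShiftInvariant (CBIter S o) := by
  induction o using Ordinal.limitRecOn with
  | zero => rwa [CBIter_zero]
  | add_one o ih => rw [CBIter_add_one]; exact shiftInvariant_derivSet ih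
  | limit o ho ih =>
    rw [CBIter_limit _ ho]
    exact fun c hc v => Set.mem_iInter.2 fun β => ih β.1 β.2 c (Set.mem_iInter.1 hc β) v

lemma subset_CBIter_of_derivSet_eq {E : Set (Config Q)} (hE : derivSet E = E) (hES : E ⊆ S)
    (o : Ordinal) : E ⊆ CBIter S o := by
  induction o using Ordinal.limitRecOn with
  | zero => rwa [CBIter_zero]
  | add_one o ih => rw [CBIter_add_one]; exact hE ▸ derivSet_mono ih
  | limit o ho ih => rw [CBIter_limit _ ho]; exact Set.subset_iInter fun β => ih β.1 β.2

/-- Otherwise `o ↦ S^{(o)}` would inject `Ordinal.{u}` into the `u`-small type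
`Set (Config Q)`. -/
lemma exists_CBIter_add_one_eq [Small.{u} Q] (S : Set (Config Q)) :
    ∃ o : Ordinal.{u}, CBIter S (o + 1) = CBIter S o := by
  by_contra! h
  have hsucc : ∀ a : Ordinal.{u}, CBIter S (a + 1) ⊂ CBIter S a := fun a =>
    (CBIter_antitone S le_self_add).ssubset_of_ne (h a)
  have hanti : StrictAnti (CBIter (Q := Q) S) := fun a b hab =>
    (CBIter_antitone S (Order.add_one_le_of_lt hab)).trans_lt (hsucc a)
  exact not_injective_of_ordinal _ hanti.injective

lemma exists_notMem_CBIter_of_exists [Small.{v} Q]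
    (h : ∃ o : Ordinal.{u}, c ∉ CBIter S o) : ∃ o : Ordinal.{v}, c ∉ CBIter S o := by
  obtain ⟨o₀, ho₀⟩ : ∃ o : Ordinal.{v}, _ := exists_CBIter_add_one_eq S
  obtain ⟨o, ho⟩ := h
  refine ⟨o₀, fun hc => ho ?_⟩
  have hperfect : derivSet (CBIter S o₀) = CBIter S o₀ := by rw [← CBIter_add_one, ho₀]
  have hsub : CBIter S o₀ ⊆ S := by
    simpa only [CBIter_zero] using CBIter_antitone S (zero_le (a := o₀))
  exact subset_CBIter_of_derivSet_eq hperfect hsub o hc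

lemma mem_CBIter_of_lt_CBRank {o : Ordinal} (h : o < CBRank S c) : c ∈ CBIter S o :=
  not_not.1 fun hc => (csInf_le' hc).not_gt h

lemma notMem_CBIter_CBRank (h : ∃ o : Ordinal.{u}, c ∉ CBIter S o) :
    c ∉ CBIter S (CBRank S c : Ordinal.{u}) := by
  obtain ⟨o, ho⟩ := h
  exact csInf_mem (s := {o | c ∉ CBIter S o}) ⟨o, ho⟩

lemma exists_isolatedIn_CBIter (hc : c ∈ S) (h : ∃ o : Ordinal.{u}, c ∉ CBIter S o) :
    ∃ β : Ordinal.{u}, CBRank S c = β + 1 ∧ IsolatedIn (CBIter S β) c := by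
  have hnot := notMem_CBIter_CBRank h
  rcases Ordinal.zero_or_succ_or_isSuccLimit (CBRank S c) with h0 | ⟨β, hβ⟩ | hlim
  · rw [h0, CBIter_zero] at hnot
    exact absurd hc hnot
  · rw [← hβ, Order.succ_eq_add_one] at hnot ⊢
    refine ⟨β, rfl, not_not.1 fun hni => hnot ?_⟩
    rw [CBIter_add_one]
    exact ⟨mem_CBIter_of_lt_CBRank (hβ ▸ Order.lt_succ β), hni⟩
  · rw [CBIter_limit _ hlim] at hnot
    exact absurd (Set.mem_iInter.2 fun β => mem_CBIter_of_lt_CBRank β.2) hnot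

end CantorBendixson

section PatternPreorder

variable {Q : Type*} [TopologicalSpace Q] {T : Set (Config Q)} {x y : Config Q}

lemma PatLe.mem_closure_range_shiftC (h : PatLe x y) :
    x ∈ closure (Set.range fun v => shiftC v y) := by
  refine mem_closure_iff.2 fun U hU hxU => ?_
  obtain ⟨I, u, hu, hsub⟩ := isOpen_pi_iff.1 hU x hxU
  obtain ⟨t, ht⟩ := h I x ⟨0, fun a _ => by simp⟩
  refine ⟨shiftC t y, hsub fun i hi => ?_, t, rfl⟩
  change y (i + t) ∈ u i
  rw [ht i hi]
  exact (hu i hi).2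

lemma PatLe.mem (hT : IsClosed T) (hinv : ShiftInvariant T) (h : PatLe x y) (hy : y ∈ T) :
    x ∈ T :=
  closure_minimal (Set.range_subset_iff.2 (hinv y hy)) hT h.mem_closure_range_shiftC

lemma PatLe.exists_shiftC_eq (hinv : ShiftInvariant T) (h : PatLe x y) (hy : y ∈ T)
    (hx : IsolatedIn T x) : ∃ v, shiftC v y = x := by
  obtain ⟨-, U, hU, hxU, hUT⟩ := isolatedIn_iff.1 hx
  obtain ⟨_, hzU, v, rfl⟩ := mem_closure_iff.1 h.mem_closure_range_shiftC U hU hxU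
  exact ⟨v, hUT _ (hinv y hy v) hzU⟩

lemma CBRank_le_of_patLe {S : Set (Config Q)} (hS : IsClosed S) (hinv : ShiftInvariant S)
    (h : PatLe x y) (hx : ∃ o : Ordinal.{u}, x ∉ CBIter S o) :
    (CBRank S y : Ordinal.{u}) ≤ CBRank S x :=
  not_lt.1 fun hlt => notMem_CBIter_CBRank hx <|
    h.mem (isClosed_CBIter hS _) (shiftInvariant_CBIter hinv _) (mem_CBIter_of_lt_CBRank hlt)

lemma CBRank_lt_of_patLe_of_not_patLe {S : Set (Config Q)} (hS : IsClosed S)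
    (hinv : ShiftInvariant S) (hx : x ∈ S) (hrx : ∃ o : Ordinal.{u}, x ∉ CBIter S o)
    (hxy : PatLe x y) (hyx : ¬ PatLe y x) : (CBRank S y : Ordinal.{u}) < CBRank S x := by
  obtain ⟨β, hβ, hiso⟩ := exists_isolatedIn_CBIter hx hrx
  refine (CBRank_le_of_patLe hS hinv hxy hrx).lt_of_ne fun heq => hyx ?_
  have hyβ : y ∈ CBIter S β := mem_CBIter_of_lt_CBRank (heq ▸ hβ ▸ lt_add_one β)
  obtain ⟨v, rfl⟩ := hxy.exists_shiftC_eq (shiftInvariant_CBIter hinv β) hyβ hiso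
  exact patLe_shiftC v y

end PatternPreorder

theorem stmt11_general {Q : Type*} [Fintype Q] [TopologicalSpace Q]
    (S : Set (Config Q)) (hcl : IsClosed S) (hinv : ShiftInvariant S)
    (x y : Config Q) (hx : x ∈ S)
    (hrx : ∃ lam : Ordinal, x ∉ CBIter S lam)
    (hxy : PatLe x y) (hyx : ¬ PatLe y x) :
    CBRank S y < CBRank S x :=
  -- `hrx` may quantify over ordinals of another universe than the values of `CBRank`.
  CBRank_lt_of_patLe_of_not_patLe hcl hinv hx (exists_notMem_CBIter_of_exists hrx) hxy hyx

/-- The pattern preorder reverses Cantor–Bendixson ranks: if `x`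
and `y` are ranked and `x ≺ y` then `rk(x) > rk(y)`. -/
theorem stmt11 {Q : Type*} [Fintype Q] [Nonempty Q] [TopologicalSpace Q] [DiscreteTopology Q]
    (S : Set (Config Q)) (hcl : IsClosed S) (hinv : ShiftInvariant S)
    (x y : Config Q) (hx : x ∈ S) (hy : y ∈ S)
    (hrx : ∃ lam : Ordinal, x ∉ CBIter S lam) (hry : ∃ lam : Ordinal, y ∉ CBIter S lam)
    (hxy : PatLe x y) (hyx : ¬ PatLe y x) :
    CBRank S y < CBRank S x :=
  stmt11_general S hcl hinv x y hx hrx hxy hyx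
end

section
/- Elements of Cantor–Bendixson rank 1 are maximal for the pattern preorder: if S ⊆ Q^{ℤ²} is a closed, shift-invariant set and x ∈ S is isolated in S, then for every y ∈ S with x ≼ y one has y ≼ x (indeed y is a shift of x). -/
open Set

/-- Isolated points of a subshift are maximal for the pattern
preorder; indeed anything above them is one of their shifts. -/
theorem stmt12 {Q : Type*} [Fintype Q] [Nonempty Q] [TopologicalSpace Q] [DiscreteTopology Q]
    (S : Set (Config Q)) (hcl : IsClosed S) (hinv : ShiftInvariant S)
    (x : Config Q) (hx : x ∈ S) (hiso : IsolatedIn S x) :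
    ∀ y ∈ S, PatLe x y → (PatLe y x ∧ ∃ v : ℤ × ℤ, y = shiftC v x) := by
  obtain ⟨U, hUopen, hUS⟩ := hiso
  have hxU : x ∈ U := by
    have : x ∈ U ∩ S := hUS ▸ rfl
    exact this.1
  obtain ⟨I, u, hu, hpi⟩ := isOpen_pi_iff.mp hUopen x hxU
  have key : ∀ z ∈ S, (∀ i ∈ I, z i = x i) → z = x := by
    intro z hzS hzI
    have hzU : z ∈ U := by
      apply hpi
      intro i hi
      rw [hzI i hi]
      exact (hu i hi).2
    have : z ∈ U ∩ S := ⟨hzU, hzS⟩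
    rwa [hUS] at this
  intro y hyS hxy
  -- the pattern x|I appears in x, hence in y
  have hap : Appears y I x := by
    apply hxy
    exact ⟨0, fun v _ => by simp [AppearsAt]⟩
  obtain ⟨t, ht⟩ := hap
  have hz : shiftC t y = x := by
    apply key _ (hinv y hyS t)
    intro i hi
    exact ht i hi
  have hyx : y = shiftC (-t) x := by
    funext w
    have := congrFun hz (w - t)
    simp only [shiftC, sub_add_cancel] at this
    simp only [shiftC, ← sub_eq_add_neg, ← this]
  refine ⟨?_, -t, hyx⟩
  intro V P ⟨s, hs⟩
  refine ⟨s - t, fun v hv => ?_⟩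
  have h1 := (congrFun hz (v + (s - t))).symm
  simp only [shiftC] at h1
  rw [h1, show v + (s - t) + t = v + s by ring]
  exact hs v hv
end

section
/- If a closed, shift-invariant set S ⊆ Q^{ℤ²} is countable, then there is no infinite strictly increasing chain for the pattern preorder in S: there is no sequence (x_n)_{n∈ℕ} of elements of S with x_n ≺ x_{n+1} for all n. -/
open Set

/-- In a countable closed shift-invariant set there is no infinite
strictly increasing chain for the pattern preorder. -/
theorem stmt13 {Q : Type*} [Fintype Q] [Nonempty Q] [TopologicalSpace Q] [DiscreteTopology Q]
    (S : Set (Config Q)) (hcl : IsClosed S) (hinv : ShiftInvariant S)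
    (hcount : S.Countable) :
    ¬ ∃ x : ℕ → Config Q, (∀ n, x n ∈ S) ∧
      ∀ n, PatLe (x n) (x (n + 1)) ∧ ¬ PatLe (x (n + 1)) (x n) := by
  rintro ⟨x, hxS, hchain⟩
  have patle_refl : ∀ z : Config Q, PatLe z z := fun _ _ _ h => h
  have patle_shift : ∀ (t : ℤ × ℤ) (c : Config Q), PatLe (shiftC t c) c := by
    rintro t c V P ⟨t', ht'⟩
    refine ⟨t' + t, fun v hv => ?_⟩
    have := ht' v hv
    simpa [shiftC, add_assoc] using this
  have patle_shift' : ∀ (t : ℤ × ℤ) (c : Config Q), PatLe c (shiftC t c) := by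
    rintro t c V P ⟨t', ht'⟩
    refine ⟨t' - t, fun v hv => ?_⟩
    have := ht' v hv
    show c ((v + (t' - t)) + t) = P v
    rw [add_assoc]
    simpa using this
  set U : Set (Config Q) := ⋃ n, {z | PatLe z (x n)} with hU
  set Λ : Set (Config Q) := closure U with hΛdef
  -- approximation lemma: agreeing on every finite window puts z in the closure
  have approx : ∀ (z : Config Q) (T : Set (Config Q)),
      (∀ I : Finset (ℤ × ℤ), ∃ w ∈ T, ∀ v ∈ I, w v = z v) → z ∈ closure T := by
    intro z T h
    rw [mem_closure_iff]
    intro O hO hz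
    obtain ⟨I, u, hu, hsub⟩ := isOpen_pi_iff.1 hO z hz
    obtain ⟨w, hwT, hw⟩ := h I
    refine ⟨w, hsub ?_, hwT⟩
    intro a ha
    rw [hw a ha]
    exact (hu a ha).2
  -- every point of U is a limit of points of U different from it
  have key : ∀ z ∈ U, z ∈ closure (U \ {z}) := by
    intro z hz
    obtain ⟨n, hn⟩ := mem_iUnion.1 hz
    have hn' : PatLe z (x n) := hn
    apply approx
    intro I
    have hz1 : PatLe z (x (n + 1)) := fun V P h => (hchain n).1 V P (hn' V P h)
    obtain ⟨t, ht⟩ := hz1 I z ⟨0, fun v _ => by rw [add_zero]⟩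
    refine ⟨shiftC t (x (n + 1)), ⟨?_, ?_⟩, fun v hv => ht v hv⟩
    · exact mem_iUnion.2 ⟨n + 1, patle_shift t (x (n + 1))⟩
    · intro hcontr
      have heq : shiftC t (x (n + 1)) = z := hcontr
      have hle : PatLe (x (n + 1)) z := heq ▸ patle_shift' t (x (n + 1))
      exact (hchain n).2 (fun V P h => hn' V P (hle V P h))
  have hUsub : U ⊆ Λ := subset_closure
  -- removing any single point does not change the closure of U
  have hUclos : ∀ y, Λ ⊆ closure (U \ {y}) := by
    intro y
    apply closure_minimal _ isClosed_closure
    intro u hu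
    by_cases h : u = y
    · subst h; exact key u hu
    · exact subset_closure ⟨hu, h⟩
  -- U (hence Λ) is contained in S
  have hUS : U ⊆ S := by
    intro z hz
    obtain ⟨n, hn⟩ := mem_iUnion.1 hz
    have hn' : PatLe z (x n) := hn
    have hzcl : z ∈ closure (range fun t : ℤ × ℤ => shiftC t (x n)) := by
      apply approx
      intro I
      obtain ⟨t, ht⟩ := hn' I z ⟨0, fun v _ => by rw [add_zero]⟩
      exact ⟨shiftC t (x n), mem_range_self t, fun v hv => ht v hv⟩
    have hr : (range fun t : ℤ × ℤ => shiftC t (x n)) ⊆ S := by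
      rintro _ ⟨t, rfl⟩; exact hinv _ (hxS n) t
    exact closure_minimal hr hcl hzcl
  have hΛS : Λ ⊆ S := closure_minimal hUS hcl
  have hΛcount : Λ.Countable := hcount.mono hΛS
  have hx0 : x 0 ∈ Λ := hUsub (mem_iUnion.2 ⟨0, patle_refl (x 0)⟩)
  -- Baire category on the compact Hausdorff space Λ
  haveI : CompactSpace ↥Λ :=
    isCompact_iff_compactSpace.mp (isClosed_closure.isCompact)
  haveI : Countable ↥Λ := hΛcount.to_subtype
  haveI : Nonempty ↥Λ := ⟨⟨x 0, hx0⟩⟩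
  have hdense : ∀ z₀ : ↥Λ, Dense ({z₀}ᶜ : Set ↥Λ) := by
    intro z₀ w
    rw [closure_subtype]
    have himg : U \ {(z₀ : Config Q)} ⊆ (Subtype.val '' ({z₀}ᶜ : Set ↥Λ)) := by
      rintro u ⟨hu, hune⟩
      refine ⟨⟨u, hUsub hu⟩, ?_, rfl⟩
      intro h
      exact hune (by simpa using congrArg Subtype.val h)
    exact closure_mono himg (hUclos _ w.2)
  haveI : T2Space ↥Λ := inferInstance
  haveI : LocallyCompactSpace ↥Λ := inferInstance
  haveI : RegularSpace ↥Λ := inferInstance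
  haveI : BaireSpace ↥Λ := inferInstance
  have hdi : Dense (⋂ z₀ : ↥Λ, ({z₀}ᶜ : Set ↥Λ)) :=
    dense_iInter_of_isOpen (fun z₀ => isOpen_compl_singleton) hdense
  obtain ⟨w, hw⟩ := hdi.nonempty
  exact (mem_iInter.1 hw w) rfl
end

section
/- If every element of a subshift is periodic, then the subshift is finite: if S ⊆ Q^{ℤ²} is closed and shift-invariant and every c ∈ S has a finite shift orbit (equivalently, the stabilizer { v ∈ ℤ² : σ_v(c) = c } has finite index in ℤ²), then S is a finite set. -/
open Set

/-!
Suppose `S` is infinite. By compactness it has an accumulation point `c`, which is invariant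
under some lattice `q ℤ²`. Points `x ∈ S` close to `c` agree with `c` on a large ball and differ
from it at some `y` of minimal sup-norm `r`. Shifting `x` by the lattice point `q ⌊y / q⌋` moves
the defect into `[0, q)²` while keeping agreement with `c` on a quadrant (depending on the signs
of `y`) intersected with a ball of radius `r`. A cluster point `z ∈ S` of these shifted points,
along which the quadrant is constant, differs from `c` but agrees with it on a whole quadrant.
As `z` and `c` are both invariant under a common lattice `m ℤ²` and every coset of `m ℤ²` meets
the quadrant, `z = c`: a contradiction.
-/

open Filter Topology

section

variable {Q : Type*}

lemma shiftC_shiftC (v w : ℤ × ℤ) (c : Config Q) :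
    shiftC v (shiftC w c) = shiftC (v + w) c := by
  funext x
  simp only [shiftC, add_assoc]

lemma shiftC_zero (c : Config Q) : shiftC 0 c = c := by
  funext x
  simp only [shiftC, add_zero]

def periods (c : Config Q) : AddSubgroup (ℤ × ℤ) where
  carrier := {v | shiftC v c = c}
  zero_mem' := shiftC_zero c
  add_mem' {v w} hv hw := by
    change shiftC (v + w) c = c
    rw [← shiftC_shiftC, (hw : shiftC w c = c), (hv : shiftC v c = c)]
  neg_mem' {v} hv := by
    change shiftC (-v) c = c
    conv_rhs => rw [← shiftC_zero c, ← neg_add_cancel v, ← shiftC_shiftC, (hv : shiftC v c = c)]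

lemma IsPeriodic.exists_pos_zsmul_mem_periods {c : Config Q} (h : IsPeriodic c) (e : ℤ × ℤ) :
    ∃ k : ℤ, 0 < k ∧ k • e ∈ periods c := by
  obtain ⟨a, b, hab, heq⟩ := h.exists_lt_map_eq_of_forall_mem
    (f := fun k : ℤ => shiftC (k • e) c) fun k => Set.mem_range_self (k • e)
  refine ⟨b - a, sub_pos.2 hab, ?_⟩
  change shiftC ((b - a) • e) c = c
  rw [sub_smul, sub_eq_neg_add, ← shiftC_shiftC, ← heq, shiftC_shiftC, neg_add_cancel,
    shiftC_zero]

def SquarePeriodic (m : ℤ) (c : Config Q) : Prop :=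
  ∀ v : ℤ × ℤ, m ∣ v.1 → m ∣ v.2 → ∀ x, c (x + v) = c x

lemma SquarePeriodic.of_dvd {m n : ℤ} {c : Config Q} (h : SquarePeriodic m c) (hmn : m ∣ n) :
    SquarePeriodic n c :=
  fun v h₁ h₂ => h v (hmn.trans h₁) (hmn.trans h₂)

lemma IsPeriodic.exists_squarePeriodic {c : Config Q} (h : IsPeriodic c) :
    ∃ m : ℤ, 0 < m ∧ SquarePeriodic m c := by
  obtain ⟨k₁, hk₁, h₁⟩ := h.exists_pos_zsmul_mem_periods (1, 0)
  obtain ⟨k₂, hk₂, h₂⟩ := h.exists_pos_zsmul_mem_periods (0, 1)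
  refine ⟨k₁ * k₂, mul_pos hk₁ hk₂, fun v hv₁ hv₂ x => ?_⟩
  obtain ⟨a, ha⟩ := (dvd_mul_right k₁ k₂).trans hv₁
  obtain ⟨b, hb⟩ := (dvd_mul_left k₂ k₁).trans hv₂
  have hv : v = a • k₁ • ((1, 0) : ℤ × ℤ) + b • k₂ • ((0, 1) : ℤ × ℤ) := by
    ext <;> simp [ha, hb, mul_comm]
  have hmem : v ∈ periods c := hv ▸ add_mem (zsmul_mem h₁ a) (zsmul_mem h₂ b)
  exact congrFun hmem x

def quadrant (d : ℤˣ × ℤˣ) (a : ℤ) : Set (ℤ × ℤ) :=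
  {t | a ≤ d.1 * t.1 ∧ a ≤ d.2 * t.2}

lemma le_units_mul_add_units_mul {u : ℤˣ} {a s k : ℤ} (hk : |s| + |a| ≤ k) :
    a ≤ u * (s + u * k) := by
  rcases Int.units_eq_one_or u with rfl | rfl <;> simp only [Units.val_one, Units.val_neg] <;>
    cases abs_cases s <;> cases abs_cases a <;> linarith

lemma eq_of_eqOn_quadrant {m a : ℤ} {d : ℤˣ × ℤˣ} {z c : Config Q} (hm : 0 < m)
    (hz : SquarePeriodic m z) (hc : SquarePeriodic m c) (h : EqOn z c (quadrant d a)) :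
    z = c := by
  funext x
  set k := m * (|x.1| + |x.2| + |a|)
  have hk : |x.1| + |x.2| + |a| ≤ k := le_mul_of_one_le_left (by positivity) hm
  set v : ℤ × ℤ := (d.1 * k, d.2 * k)
  have hv₁ : m ∣ v.1 := (dvd_mul_right m _).mul_left _
  have hv₂ : m ∣ v.2 := (dvd_mul_right m _).mul_left _
  have hxv : x + v ∈ quadrant d a :=
    ⟨le_units_mul_add_units_mul (by linarith [abs_nonneg x.2]),
      le_units_mul_add_units_mul (by linarith [abs_nonneg x.1])⟩
  calc z x = z (x + v) := (hz v hv₁ hv₂ x).symm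
    _ = c (x + v) := h hxv
    _ = c x := hc v hv₁ hv₂ x

def supNorm (t : ℤ × ℤ) : ℕ := max t.1.natAbs t.2.natAbs

lemma exists_minimal_ne {α β : Type*} {f g : α → β} (h : f ≠ g) (μ : α → ℕ) :
    ∃ y, f y ≠ g y ∧ ∀ t, μ t < μ y → f t = g t := by
  obtain ⟨y, hy, hmin⟩ :=
    (InvImage.wf μ wellFounded_lt).has_min {y | f y ≠ g y} (Function.ne_iff.1 h)
  exact ⟨y, hy, fun t ht => by_contra fun hne => hmin t hne ht⟩

def inward (y : ℤ) : ℤˣ := if 0 ≤ y then -1 else 1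

lemma natAbs_add_mul_ediv_lt {q y t : ℤ} {r : ℕ} (hq : 0 < q) (hy : y.natAbs ≤ r)
    (ht : t.natAbs < r) (hd : q ≤ inward y * t) : (t + q * (y / q)).natAbs < r := by
  have hdiv := Int.emod_add_mul_ediv y q
  have hmod₀ := Int.emod_nonneg y hq.ne'
  have hmod := Int.emod_lt_of_pos y hq
  have hpos : 0 ≤ y → 0 ≤ q * (y / q) := fun h => mul_nonneg hq.le (Int.ediv_nonneg h hq.le)
  unfold inward at hd
  split_ifs at hd <;> simp only [Units.val_neg, Units.val_one, neg_mul, one_mul] at hd <;> omega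

lemma SquarePeriodic.exists_recentered {q : ℤ} {c x : Config Q} {y : ℤ × ℤ}
    (hc : SquarePeriodic q c) (hq : 0 < q) (hy : x y ≠ c y)
    (hx : ∀ t, supNorm t < supNorm y → x t = c t) :
    ∃ L : ℤ × ℤ, (∃ w ∈ Finset.Ico 0 q ×ˢ Finset.Ico 0 q, shiftC L x w ≠ c w) ∧
      ∀ t ∈ quadrant (inward y.1, inward y.2) q, supNorm t < supNorm y → shiftC L x t = c t := by
  set L : ℤ × ℤ := (q * (y.1 / q), q * (y.2 / q))
  have hL₁ : q ∣ L.1 := dvd_mul_right _ _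
  have hL₂ : q ∣ L.2 := dvd_mul_right _ _
  refine ⟨L, ⟨(y.1 % q, y.2 % q), ?_, ?_⟩, ?_⟩
  · simp [Int.emod_nonneg _ hq.ne', Int.emod_lt_of_pos _ hq]
  · have hwL : (y.1 % q, y.2 % q) + L = y := by
      ext <;> simp [L, Int.emod_add_mul_ediv]
    change x (_ + L) ≠ c _
    rwa [← hc L hL₁ hL₂, hwL]
  · rintro t ⟨ht₁, ht₂⟩ ht
    have htL : supNorm (t + L) < supNorm y := by
      simp only [supNorm, max_lt_iff, Prod.fst_add, Prod.snd_add, L] at ht ⊢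
      exact ⟨natAbs_add_mul_ediv_lt hq (le_max_left _ _) ht.1 ht₁,
        natAbs_add_mul_ediv_lt hq (le_max_right _ _) ht.2 ht₂⟩
    rw [shiftC, hx _ htL, hc L hL₁ hL₂]

section Topology

variable [TopologicalSpace Q] [DiscreteTopology Q]

lemma eventually_nhds_apply_eq {X : Type*} [TopologicalSpace X] {f : X → Config Q}
    (hf : Continuous f) (a : X) (B : Finset (ℤ × ℤ)) :
    ∀ᶠ x in 𝓝 a, ∀ t ∈ B, f x t = f a t :=
  (eventually_all_finset B).2 fun t _ =>
    ((IsLocallyConstant.iff_continuous _).2 ((continuous_apply t).comp hf)).eventually_eq a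

lemma AccPt.exists_far_minimal_defect {S : Set (Config Q)} {c : Config Q} (hc : AccPt c (𝓟 S))
    (n : ℕ) :
    ∃ x ∈ S, ∃ y, n < supNorm y ∧ x y ≠ c y ∧ ∀ t, supNorm t < supNorm y → x t = c t := by
  set ball := Finset.Icc (-n : ℤ) n ×ˢ Finset.Icc (-n : ℤ) n
  obtain ⟨x, ⟨hxc, hxS⟩, hx⟩ := ((accPt_iff_frequently.1 hc).and_eventually
    (eventually_nhds_apply_eq continuous_id c ball)).exists
  obtain ⟨y, hy, hmin⟩ := exists_minimal_ne hxc supNorm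
  refine ⟨x, hxS, y, ?_, hy, hmin⟩
  by_contra hyn
  refine hy (hx y ?_)
  simp only [supNorm, ball, Finset.mem_product, Finset.mem_Icc] at hyn ⊢
  omega

lemma exists_recentered_defect {S : Set (Config Q)} {c : Config Q} {q : ℤ}
    (hinv : ShiftInvariant S) (hc : AccPt c (𝓟 S)) (hq : 0 < q)
    (hcq : SquarePeriodic q c) (n : ℕ) :
    ∃ z ∈ S, ∃ d : ℤˣ × ℤˣ, ∃ r : ℕ, n < r ∧
      (∃ w ∈ Finset.Ico 0 q ×ˢ Finset.Ico 0 q, z w ≠ c w) ∧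
      ∀ t ∈ quadrant d q, supNorm t < r → z t = c t := by
  obtain ⟨x, hxS, y, hny, hy, hx⟩ := hc.exists_far_minimal_defect n
  obtain ⟨L, hw, hagree⟩ := hcq.exists_recentered hq hy hx
  exact ⟨shiftC L x, hinv x hxS L, _, _, hny, hw, hagree⟩

lemma IsCompact.exists_ne_eqOn_quadrant {S : Set (Config Q)} (hS : IsCompact S) {c : Config Q}
    {a : ℤ} {B : Finset (ℤ × ℤ)} {Z : ℕ → Config Q} {d : ℕ → ℤˣ × ℤˣ} {r : ℕ → ℕ}
    (hZS : ∀ n, Z n ∈ S) (hr : ∀ n, n < r n) (hZB : ∀ n, ∃ w ∈ B, Z n w ≠ c w)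
    (hZc : ∀ n, ∀ t ∈ quadrant (d n) a, supNorm t < r n → Z n t = c t) :
    ∃ z ∈ S, z ≠ c ∧ ∃ d₀, EqOn z c (quadrant d₀ a) := by
  -- Clustering in `S × {±1}²` (discrete second factor) also pins down the direction `d₀`.
  obtain ⟨⟨z, d₀⟩, ⟨hzS, -⟩, hclus⟩ := (hS.prod isCompact_univ).exists_mapClusterPt_of_frequently
    (l := atTop) (f := fun n => (Z n, d n)) (Frequently.of_forall fun n => ⟨hZS n, trivial⟩)
  refine ⟨z, hzS, ?_, d₀, fun t ht => ?_⟩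
  · rintro rfl
    obtain ⟨n, hn⟩ := (hclus.frequently (eventually_nhds_apply_eq continuous_fst _ B)).exists
    obtain ⟨w, hwB, hw⟩ := hZB n
    exact hw (hn w hwB)
  · have hnear : ∀ᶠ p in 𝓝 (z, d₀), p.1 t = z t ∧ p.2 = d₀ :=
      ((eventually_nhds_apply_eq continuous_fst _ {t}).mono fun p hp => hp t (by simp)).and
        (((IsLocallyConstant.iff_continuous _).2 continuous_snd).eventually_eq _)
    obtain ⟨n, ⟨hnt, hnd⟩, hn⟩ := ((hclus.frequently hnear).and_eventually
      (eventually_ge_atTop (supNorm t))).exists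
    rw [← hnt]
    exact hZc n t (by rwa [show d n = d₀ from hnd]) (hn.trans_lt (hr n))

end Topology

end

theorem stmt14_general {Q : Type*} [Fintype Q] [TopologicalSpace Q] [DiscreteTopology Q]
    (S : Set (Config Q)) (hcl : IsClosed S) (hinv : ShiftInvariant S)
    (hper : ∀ c ∈ S, IsPeriodic c) :
    S.Finite := by
  by_contra hinf
  have hS : IsCompact S := hcl.isCompact
  obtain ⟨c, hcS, hc⟩ := Set.Infinite.exists_accPt_of_subset_isCompact hinf hS subset_rfl
  obtain ⟨q, hq, hcq⟩ := (hper c hcS).exists_squarePeriodic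
  choose Z hZS d r hr hZB hZc using exists_recentered_defect hinv hc hq hcq
  obtain ⟨z, hzS, hzc, d₀, hz⟩ := hS.exists_ne_eqOn_quadrant hZS hr hZB hZc
  obtain ⟨p, hp, hzp⟩ := (hper z hzS).exists_squarePeriodic
  exact hzc (eq_of_eqOn_quadrant (mul_pos hq hp) (hzp.of_dvd (dvd_mul_left p q))
    (hcq.of_dvd (dvd_mul_right q p)) hz)

/-- If every element of a subshift is periodic (finite shift
orbit), then the subshift is finite. -/
theorem stmt14 {Q : Type*} [Fintype Q] [Nonempty Q] [TopologicalSpace Q] [DiscreteTopology Q]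
    (S : Set (Config Q)) (hcl : IsClosed S) (hinv : ShiftInvariant S)
    (hper : ∀ c ∈ S, IsPeriodic c) :
    S.Finite :=
  stmt14_general S hcl hinv hper
end
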